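/- arXiv:1104.5595 — 4 statements merged into one kernel-verified Lean document; each statement's English description precedes it below -/
import Mathlib

section
/- For every n ≥ 2, the target group obtained by factoring the progenitor 2^{⋆n} : Sₙ (with Sₙ acting on the 1-element subsets of {1,…,n}) by the single relator (t_{1}·(1 2))³ is isomorphic to the symmetric group on n+1 letters, i.e. to the Coxeter group of type Aₙ. -/
open Monoid Pointwise

/-- The type of `k`-element subsets of `Fin n`. -/
abbrev KSub (n k : ℕ) := {s : Finset (Fin n) // s.card = k}

/-- The free product of copies of `ℤ/2ℤ` indexed by the `k`-element subsets of `Fin n`. -/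
abbrev FP (n k : ℕ) := Monoid.CoprodI (fun _ : KSub n k => Multiplicative (ZMod 2))

/-- The symmetric generator `t_S`. -/
def tFP {n k : ℕ} (S : KSub n k) : FP n k :=
  Monoid.CoprodI.of (i := S) (Multiplicative.ofAdd (1 : ZMod 2))

/-- The action of a permutation of `Fin n` on the `k`-element subsets. -/
instance KSub.instMulAction (n k : ℕ) : MulAction (Equiv.Perm (Fin n)) (KSub n k) where
  smul σ S := ⟨σ • S.1, by rw [Finset.card_smul_finset]; exact S.2⟩
  one_smul S := Subtype.ext (one_smul _ S.1)
  mul_smul σ τ S := Subtype.ext (mul_smul σ τ S.1)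

/-- The endomorphism of the free product induced by a permutation of `Fin n`. -/
def fpHom {n k : ℕ} (σ : Equiv.Perm (Fin n)) : FP n k →* FP n k :=
  Monoid.CoprodI.lift (fun S => Monoid.CoprodI.of (M := fun _ : KSub n k => Multiplicative (ZMod 2)) (i := σ • S))

lemma fpHom_comp {n k : ℕ} (σ τ : Equiv.Perm (Fin n)) :
    (fpHom (n := n) (k := k) σ).comp (fpHom τ) = fpHom (σ * τ) := by
  apply Monoid.CoprodI.ext_hom
  intro S
  ext x
  simp [fpHom, Monoid.CoprodI.lift_of, mul_smul]

lemma fpHom_one {n k : ℕ} : fpHom (n := n) (k := k) 1 = MonoidHom.id _ := by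
  apply Monoid.CoprodI.ext_hom
  intro S
  ext x
  simp [fpHom, Monoid.CoprodI.lift_of]

/-- The action of `Sym(Fin n)` on the free product, permuting the free factors. -/
def fpAut (n k : ℕ) : Equiv.Perm (Fin n) →* MulAut (FP n k) :=
  MonoidHom.mk' (fun σ =>
    { toFun := fpHom σ
      invFun := fpHom σ⁻¹
      left_inv := fun x => by
        have h := fpHom_comp (n := n) (k := k) σ⁻¹ σ
        rw [inv_mul_cancel, fpHom_one] at h
        exact DFunLike.congr_fun h x
      right_inv := fun x => by
        have h := fpHom_comp (n := n) (k := k) σ σ⁻¹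
        rw [mul_inv_cancel, fpHom_one] at h
        exact DFunLike.congr_fun h x
      map_mul' := map_mul _ })
    (fun σ τ => by
      ext x
      exact (DFunLike.congr_fun (fpHom_comp (n := n) (k := k) σ τ) x).symm)

/-- The progenitor `2^{⋆C(n,k)} : Sₙ`. -/
abbrev Progenitor (n k : ℕ) := FP n k ⋊[fpAut n k] Equiv.Perm (Fin n)

/-- The target group: the quotient of the progenitor by the normal closure of the
single relator `(t_{S₀}·σ₀)³`. -/
abbrev TargetGroup (n k : ℕ) (S₀ : KSub n k) (σ₀ : Equiv.Perm (Fin n)) :=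
  Progenitor n k ⧸ Subgroup.normalClosure
    {(SemidirectProduct.inl (tFP S₀) * SemidirectProduct.inr σ₀) ^ 3}

/-- The image in the target group of the symmetric generator `t_S`. -/
def tbar {n k : ℕ} (S₀ : KSub n k) (σ₀ : Equiv.Perm (Fin n)) (S : KSub n k) :
    TargetGroup n k S₀ σ₀ :=
  QuotientGroup.mk (SemidirectProduct.inl (tFP S))

/-- The canonical map from the control group `Sₙ` to the target group. -/
def pbar {n k : ℕ} (S₀ : KSub n k) (σ₀ : Equiv.Perm (Fin n)) :
    Equiv.Perm (Fin n) →* TargetGroup n k S₀ σ₀ :=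
  (QuotientGroup.mk' _).comp (SemidirectProduct.inr)

/-!
In `G_A(n)` the symmetric generators are involutions permuted by `Sₙ`, and the relator
`(t_i (i j))³ = 1` rewrites as `t_i t_j = t_j (i j)`; conjugating, `t_c t_d = t_d (c d)` for all
`c ≠ d`. Hence every element has the form `t_o π`, where `o` is a point of `Fin n` or absent.
Adjoining a new letter `∞` (here `none : Option (Fin n)`), the assignment `t_a ↦ (∞ a)`, `π ↦ π`
respects the defining relations and sends `t_o π` to `(∞ o) π`. That is the standard bijection
`Option (Fin n) × Sₙ ≃ Sym (Option (Fin n))`, so the induced homomorphism is an isomorphism.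
-/

section ZModHom

variable {G : Type*} [Group G] {m : ℕ}

def zmodPowHom (g : G) (hg : g ^ m = 1) : Multiplicative (ZMod m) →* G :=
  AddMonoidHom.toMultiplicativeLeft
    (ZMod.lift m ⟨zmultiplesHom (Additive G) (Additive.ofMul g),
      by simpa using congrArg Additive.ofMul hg⟩)

@[simp]
theorem zmodPowHom_ofAdd_one (g : G) (hg : g ^ m = 1) :
    zmodPowHom g hg (Multiplicative.ofAdd 1) = g := by
  rw [← Int.cast_one]
  simp only [zmodPowHom, AddMonoidHom.toMultiplicativeLeft_apply_apply, toAdd_ofAdd,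
    ZMod.lift_coe]
  simp

theorem MonoidHom.ext_multiplicative_zmod {f₁ f₂ : Multiplicative (ZMod m) →* G}
    (h : f₁ (Multiplicative.ofAdd 1) = f₂ (Multiplicative.ofAdd 1)) : f₁ = f₂ := by
  refine MonoidHom.ext fun x => ?_
  obtain ⟨k, hk⟩ := ZMod.intCast_surjective (Multiplicative.toAdd x)
  have hx : x = Multiplicative.ofAdd (1 : ZMod m) ^ k := by
    rw [← ofAdd_zsmul, zsmul_one, hk, ofAdd_toAdd]
  rw [hx, map_zpow, map_zpow, h]

end ZModHom

namespace TargetGroup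

open SemidirectProduct

variable {n k : ℕ} {S₀ : KSub n k} {σ₀ : Equiv.Perm (Fin n)}

theorem tbar_mul_self (S : KSub n k) : tbar S₀ σ₀ S * tbar S₀ σ₀ S = 1 := by
  have h : tFP S * tFP S = 1 := by
    rw [tFP, ← map_mul, ← ofAdd_add, show (1 + 1 : ZMod 2) = 0 from rfl, ofAdd_zero, map_one]
  rw [tbar, ← QuotientGroup.mk_mul, ← map_mul, h, map_one, QuotientGroup.mk_one]

theorem pbar_mul_tbar_mul_inv (π : Equiv.Perm (Fin n)) (S : KSub n k) :
    pbar S₀ σ₀ π * tbar S₀ σ₀ S * (pbar S₀ σ₀ π)⁻¹ = tbar S₀ σ₀ (π • S) := by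
  have h : fpAut n k π (tFP S) = tFP (π • S) := by
    simp [fpAut, fpHom, tFP]
  rw [pbar, tbar, tbar, ← h, inl_aut]
  simp only [MonoidHom.comp_apply, QuotientGroup.mk'_apply, QuotientGroup.mk_mul,
    QuotientGroup.mk_inv, map_inv]

theorem tbar_mul_pbar_pow_three : (tbar S₀ σ₀ S₀ * pbar S₀ σ₀ σ₀) ^ 3 = 1 :=
  (QuotientGroup.eq_one_iff _).mpr (Subgroup.subset_normalClosure rfl)

theorem closure_range_tbar_union_range_pbar :
    Subgroup.closure (Set.range (tbar S₀ σ₀) ∪ Set.range (pbar S₀ σ₀)) = ⊤ := by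
  refine eq_top_iff.mpr fun x _ => ?_
  induction x using QuotientGroup.induction_on with | H x => ?_
  rw [← inl_left_mul_inr_right x, QuotientGroup.mk_mul]
  refine mul_mem ?_ (Subgroup.subset_closure (Or.inr ⟨x.right, rfl⟩))
  induction x.left using Monoid.CoprodI.induction_on with
  | one => simp
  | of S a =>
    obtain rfl | rfl : a = 1 ∨ a = Multiplicative.ofAdd 1 := by revert a; decide
    · simp
    · exact Subgroup.subset_closure (Or.inl ⟨S, rfl⟩)
  | mul a b ha hb => rw [map_mul, QuotientGroup.mk_mul]; exact mul_mem ha hb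

variable {H : Type*} [Group H] (t : KSub n k → H) (f : Equiv.Perm (Fin n) →* H)
  (ht : ∀ S, t S * t S = 1) (hf : ∀ π S, f π * t S * (f π)⁻¹ = t (π • S))
  (hrel : (t S₀ * f σ₀) ^ 3 = 1)

def lift : TargetGroup n k S₀ σ₀ →* H :=
  QuotientGroup.lift _
    (SemidirectProduct.lift
      (Monoid.CoprodI.lift fun S => zmodPowHom (t S) ((pow_two (t S)).trans (ht S))) f
      fun π => Monoid.CoprodI.ext_hom _ _ fun S => MonoidHom.ext_multiplicative_zmod <| by
        simpa [fpAut, fpHom] using (hf π S).symm)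
    (Subgroup.normalClosure_le_normal <| Set.singleton_subset_iff.mpr <| by
      simpa [tFP] using hrel)

@[simp]
theorem lift_tbar (S : KSub n k) : lift t f ht hf hrel (tbar S₀ σ₀ S) = t S := by
  rw [lift, tbar, QuotientGroup.lift_mk, SemidirectProduct.lift_inl, tFP,
    Monoid.CoprodI.lift_of, zmodPowHom_ofAdd_one]

@[simp]
theorem lift_pbar (π : Equiv.Perm (Fin n)) : lift t f ht hf hrel (pbar S₀ σ₀ π) = f π := by
  rw [lift, pbar, MonoidHom.comp_apply, QuotientGroup.mk'_apply, QuotientGroup.lift_mk,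
    SemidirectProduct.lift_inr]

end TargetGroup

open Equiv Function

theorem mul_conj_eq_conj_mul_of_pow_three {G : Type*} [Group G] {a p : G} (ha : a * a = 1)
    (hp : p * p = 1) (h : (a * p) ^ 3 = 1) : a * (p * a * p⁻¹) = p * a * p⁻¹ * p := by
  rw [inv_eq_of_mul_eq_one_right hp]
  calc a * (p * a * p) = (a * p)⁻¹ :=
        eq_inv_of_mul_eq_one_left (by rw [← h]; simp only [pow_three, mul_assoc])
    _ = p * a * p * p := by
      rw [mul_inv_rev, inv_eq_of_mul_eq_one_right ha, inv_eq_of_mul_eq_one_right hp, mul_assoc,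
        mul_assoc, hp, mul_one]

theorem exists_perm_apply_eq_apply_eq {α : Type*} [DecidableEq α] {i j c d : α} (hij : i ≠ j)
    (hcd : c ≠ d) : ∃ π : Perm α, π i = c ∧ π j = d := by
  have hi : i ≠ swap i c d := by
    rw [ne_eq, eq_comm, swap_apply_eq_iff, swap_apply_left]
    exact hcd.symm
  refine ⟨swap i c * swap j (swap i c d), ?_, ?_⟩
  · rw [Perm.mul_apply, swap_apply_of_ne_of_ne hij hi, swap_apply_left]
  · rw [Perm.mul_apply, swap_apply_left, swap_apply_self]

@[simps]
def Equiv.Perm.optionCongrHom (α : Type*) : Perm α →* Perm (Option α) where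
  toFun := optionCongr
  map_one' := optionCongr_one
  map_mul' σ τ := optionCongr_trans τ σ

noncomputable def finsetCardOneEquiv (α : Type*) : α ≃ {s : Finset α // s.card = 1} :=
  Equiv.ofBijective (fun a => ⟨{a}, Finset.card_singleton a⟩)
    ⟨fun _ _ h => Finset.singleton_injective (congrArg Subtype.val h),
      fun S => (Finset.card_eq_one.mp S.2).imp fun _ h => Subtype.ext h.symm⟩

theorem perm_smul_finsetCardOneEquiv {n : ℕ} (π : Perm (Fin n)) (a : Fin n) :
    (π • finsetCardOneEquiv (Fin n) a : KSub n 1) = finsetCardOneEquiv (Fin n) (π a) :=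
  Subtype.ext (Finset.smul_finset_singleton ..)

theorem TargetGroup.pbar_mul_tbar_singleton_mul_inv {n : ℕ} {S₀ : KSub n 1} {σ₀ : Perm (Fin n)}
    (π : Perm (Fin n)) (a : Fin n) :
    pbar S₀ σ₀ π * tbar S₀ σ₀ (finsetCardOneEquiv (Fin n) a) * (pbar S₀ σ₀ π)⁻¹ =
      tbar S₀ σ₀ (finsetCardOneEquiv (Fin n) (π a)) := by
  rw [TargetGroup.pbar_mul_tbar_mul_inv, perm_smul_finsetCardOneEquiv]

section TypeA

variable {n : ℕ} {i j : Fin n}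

local notation "T" a:max =>
  tbar (finsetCardOneEquiv (Fin n) i) (swap i j) (finsetCardOneEquiv (Fin n) a)
local notation "P" => pbar (finsetCardOneEquiv (Fin n) i) (swap i j)

theorem tbar_mul_tbar_of_ne (hij : i ≠ j) {c d : Fin n} (hcd : c ≠ d) :
    T c * T d = T d * P (swap c d) := by
  have hbase : T i * T j = T j * P (swap i j) := by
    have hj : T j = P (swap i j) * T i * (P (swap i j))⁻¹ := by
      rw [TargetGroup.pbar_mul_tbar_singleton_mul_inv, swap_apply_left]
    rw [hj]
    exact mul_conj_eq_conj_mul_of_pow_three (TargetGroup.tbar_mul_self _)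
      (by rw [← map_mul, swap_mul_self, map_one]) TargetGroup.tbar_mul_pbar_pow_three
  obtain ⟨π, rfl, rfl⟩ := exists_perm_apply_eq_apply_eq hij hcd
  simp only [← TargetGroup.pbar_mul_tbar_singleton_mul_inv π]
  calc P π * T i * (P π)⁻¹ * (P π * T j * (P π)⁻¹) = P π * (T i * T j) * (P π)⁻¹ := by group
    _ = P π * T j * (P π)⁻¹ * P (swap (π i) (π j)) := by
      rw [hbase, swap_apply_apply, map_mul, map_mul, map_inv]; group

variable (i j) in
noncomputable def normalForm (x : Option (Fin n) × Perm (Fin n)) :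
    TargetGroup n 1 (finsetCardOneEquiv (Fin n) i) (swap i j) :=
  x.1.elim 1 (fun a => T a) * P x.2

theorem normalForm_mul_pbar (x : Option (Fin n) × Perm (Fin n)) (π : Perm (Fin n)) :
    normalForm i j x * P π = normalForm i j (x.1, x.2 * π) := by
  rw [normalForm, normalForm, map_mul, mul_assoc]

theorem exists_normalForm_eq_mul_tbar (hij : i ≠ j) (o : Option (Fin n)) (d : Fin n) :
    ∃ x, normalForm i j x = o.elim 1 (fun a => T a) * T d := by
  rcases o with _ | c
  · exact ⟨(some d, 1), by simp [normalForm]⟩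
  rcases eq_or_ne c d with rfl | hcd
  · exact ⟨(none, 1), by simp [normalForm, TargetGroup.tbar_mul_self]⟩
  · exact ⟨(some d, swap c d), by simp [normalForm, tbar_mul_tbar_of_ne hij hcd]⟩

theorem normalForm_mul_mem_range (hij : i ≠ j)
    {g y : TargetGroup n 1 (finsetCardOneEquiv (Fin n) i) (swap i j)}
    (hy : y ∈ Set.range (tbar _ _) ∪ Set.range P) (hg : g ∈ Set.range (normalForm i j)) :
    g * y ∈ Set.range (normalForm i j) := by
  obtain ⟨⟨o, π⟩, rfl⟩ := hg
  rcases hy with ⟨S, rfl⟩ | ⟨ρ, rfl⟩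
  · obtain ⟨d, rfl⟩ := (finsetCardOneEquiv (Fin n)).surjective S
    obtain ⟨x, hx⟩ := exists_normalForm_eq_mul_tbar hij o (π d)
    refine ⟨(x.1, x.2 * π), ?_⟩
    rw [← normalForm_mul_pbar, hx, normalForm, mul_assoc, mul_assoc,
      ← TargetGroup.pbar_mul_tbar_singleton_mul_inv, inv_mul_cancel_right]
  · exact ⟨(o, π * ρ), (normalForm_mul_pbar (o, π) ρ).symm⟩

theorem normalForm_surjective (hij : i ≠ j) : Surjective (normalForm i j) := by
  intro g
  have hg := TargetGroup.closure_range_tbar_union_range_pbar ▸ Subgroup.mem_top g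
  induction hg using Subgroup.closure_induction_right with
  | one => exact ⟨(none, 1), by simp [normalForm]⟩
  | mul_right x _ y hy ih => exact normalForm_mul_mem_range hij hy ih
  | mul_inv_cancel x _ y hy ih =>
    refine normalForm_mul_mem_range hij ?_ ih
    rcases hy with ⟨S, rfl⟩ | ⟨ρ, rfl⟩
    · exact Or.inl ⟨S, (inv_eq_of_mul_eq_one_right (TargetGroup.tbar_mul_self S)).symm⟩
    · exact Or.inr ⟨ρ⁻¹, map_inv _ _⟩

variable (i j) in
noncomputable def toPermOption (hij : i ≠ j) :
    TargetGroup n 1 (finsetCardOneEquiv (Fin n) i) (swap i j) →* Perm (Option (Fin n)) :=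
  TargetGroup.lift (fun S => swap none (some ((finsetCardOneEquiv (Fin n)).symm S)))
    (Perm.optionCongrHom (Fin n)) (fun _ => swap_mul_self _ _)
    (fun π S => by
      obtain ⟨a, rfl⟩ := (finsetCardOneEquiv (Fin n)).surjective S
      rw [perm_smul_finsetCardOneEquiv, Equiv.symm_apply_apply, Equiv.symm_apply_apply]
      simpa using (swap_apply_apply (optionCongr π) none (some a)).symm)
    (by
      have h3 := (Perm.isThreeCycle_swap_mul_swap_same (Option.some_ne_none i)
        (Option.some_injective _ |>.ne hij) (Option.some_ne_none j).symm).orderOf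
      rw [Equiv.symm_apply_apply, Perm.optionCongrHom_apply, optionCongr_swap, swap_comm]
      exact h3 ▸ pow_orderOf_eq_one _)

theorem toPermOption_normalForm (hij : i ≠ j) (x : Option (Fin n) × Perm (Fin n)) :
    toPermOption i j hij (normalForm i j x) = Perm.decomposeOption.symm x := by
  obtain ⟨_ | a, π⟩ := x <;> simp [normalForm, toPermOption, Perm.one_def]

theorem toPermOption_bijective (hij : i ≠ j) : Bijective (toPermOption i j hij) := by
  have hcomp : toPermOption i j hij ∘ normalForm i j = Perm.decomposeOption.symm :=
    funext (toPermOption_normalForm hij)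
  have hnf : Bijective (normalForm i j) :=
    ⟨(hcomp ▸ Perm.decomposeOption.symm.injective).of_comp, normalForm_surjective hij⟩
  exact (Bijective.of_comp_iff _ hnf).mp (hcomp ▸ Perm.decomposeOption.symm.bijective)

end TypeA

/-- For every `n ≥ 2`, the target group obtained by factoring the progenitor
`2^{⋆n} : Sₙ` (with `Sₙ` acting on the 1-element subsets of `{1,…,n}`) by the single relator
`(t₁·(1 2))³` is isomorphic to the symmetric group on `n + 1` letters, i.e. the
Coxeter group of type `Aₙ`. -/
theorem targetGroup_A_iso_symmetricGroup (n : ℕ) (hn : 2 ≤ n) :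
    Nonempty
      (TargetGroup n 1 ⟨{⟨0, by omega⟩}, Finset.card_singleton _⟩
          (Equiv.swap ⟨0, by omega⟩ ⟨1, by omega⟩) ≃*
        Equiv.Perm (Fin (n + 1))) :=
  ⟨(MulEquiv.ofBijective _ (toPermOption_bijective (Fin.ne_of_val_ne zero_ne_one))).trans
    (finSuccEquiv n).symm.permCongrHom⟩
end

section
/- Let n ≥ 2 and let N be a subgroup of the symmetric group Sym(Fin n) which is perfect (N equals its own commutator subgroup) and whose natural action on Fin n is primitive. Let P = F ⋊ N be the progenitor, where F is the free product of n copies of ℤ/2ℤ indexed by Fin n and N acts by permuting the free factors. Then the commutator subgroup P′ of P has index exactly 2 in P, and P′ is perfect, i.e. P″ = P′. -/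
open Monoid

/-- The free product of `n` copies of `ℤ/2ℤ`, indexed by `Fin n`. -/
abbrev FP1 (n : ℕ) := Monoid.CoprodI (fun _ : Fin n => Multiplicative (ZMod 2))

/-- The symmetric generator `t_i`. -/
def tFP1 {n : ℕ} (i : Fin n) : FP1 n :=
  Monoid.CoprodI.of (i := i) (Multiplicative.ofAdd (1 : ZMod 2))

/-- The endomorphism of the free product induced by a permutation of `Fin n`. -/
def fp1Hom {n : ℕ} (σ : Equiv.Perm (Fin n)) : FP1 n →* FP1 n :=
  Monoid.CoprodI.lift
    (fun i => Monoid.CoprodI.of (M := fun _ : Fin n => Multiplicative (ZMod 2)) (i := σ i))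

lemma fp1Hom_comp {n : ℕ} (σ τ : Equiv.Perm (Fin n)) :
    (fp1Hom (n := n) σ).comp (fp1Hom τ) = fp1Hom (σ * τ) := by
  apply Monoid.CoprodI.ext_hom
  intro i
  ext x
  simp [fp1Hom, Monoid.CoprodI.lift_of]

lemma fp1Hom_one {n : ℕ} : fp1Hom (n := n) 1 = MonoidHom.id _ := by
  apply Monoid.CoprodI.ext_hom
  intro i
  ext x
  simp [fp1Hom, Monoid.CoprodI.lift_of]

/-- The action of `Sym(Fin n)` on the free product, permuting the free factors. -/
def fp1Aut (n : ℕ) : Equiv.Perm (Fin n) →* MulAut (FP1 n) :=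
  MonoidHom.mk' (fun σ =>
    { toFun := fp1Hom σ
      invFun := fp1Hom σ⁻¹
      left_inv := fun x => by
        have h := fp1Hom_comp (n := n) σ⁻¹ σ
        rw [inv_mul_cancel, fp1Hom_one] at h
        exact DFunLike.congr_fun h x
      right_inv := fun x => by
        have h := fp1Hom_comp (n := n) σ σ⁻¹
        rw [mul_inv_cancel, fp1Hom_one] at h
        exact DFunLike.congr_fun h x
      map_mul' := map_mul _ })
    (fun σ τ => by
      ext x
      exact (DFunLike.congr_fun (fp1Hom_comp (n := n) σ τ) x).symm)

/-- The progenitor `2^{⋆n} : N`, for a subgroup `N` of `Sym(Fin n)`. -/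
abbrev Progenitor1 (n : ℕ) (N : Subgroup (Equiv.Perm (Fin n))) :=
  FP1 n ⋊[(fp1Aut n).comp N.subtype] ↥N

/-- An action is preprimitive if it is (pre)transitive and every block is trivial,
i.e. it preserves no nontrivial partition. -/
def IsPreprimitive (G X : Type*) [Group G] [MulAction G X] : Prop :=
  MulAction.IsPretransitive G X ∧
    ∀ B : Set X, MulAction.IsBlock G B → MulAction.IsTrivialBlock B

/-!
Let `parity : P → ℤ/2ℤ` count the letters `tᵢ` modulo 2. It is onto and `P′ ≤ ker parity`, so
everything follows from `ker parity ≤ P″`. Since `N` is perfect, its image lies in every term of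
the derived series of `P`. Modulo any normal subgroup `K ⊇ N`, conjugation by `σ ∈ N` identifies
`tᵢ` with `t_{σ i}`, so by transitivity all generators become equal in `P ⧸ K`, the image of a word
depends only on its parity, and hence `ker parity ≤ K`.
-/

open SemidirectProduct

theorem derivedSeries_eq_top_of_commutator_eq_top {G : Type*} [Group G]
    (h : commutator G = ⊤) (k : ℕ) : derivedSeries G k = ⊤ := by
  induction k with
  | zero => rfl
  | succ k ih => rw [derivedSeries_succ, ih, ← commutator_def, h]

theorem MonoidHom.range_le_derivedSeries_of_commutator_eq_top {G H : Type*} [Group G] [Group H]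
    (f : G →* H) (h : commutator G = ⊤) (k : ℕ) : f.range ≤ derivedSeries H k := by
  rw [f.range_eq_map, ← derivedSeries_eq_top_of_commutator_eq_top h k]
  exact map_derivedSeries_le_derivedSeries f k

def FP1.parity (n : ℕ) : FP1 n →* Multiplicative (ZMod 2) :=
  CoprodI.lift fun _ => MonoidHom.id _

@[simp]
theorem FP1.parity_of {n : ℕ} (i : Fin n) (x : Multiplicative (ZMod 2)) :
    FP1.parity n (CoprodI.of (i := i) x) = x :=
  CoprodI.lift_of _ _

@[simp]
theorem fp1Aut_apply_of {n : ℕ} (σ : Equiv.Perm (Fin n)) (i : Fin n)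
    (x : Multiplicative (ZMod 2)) : fp1Aut n σ (CoprodI.of (i := i) x) = CoprodI.of (i := σ i) x :=
  CoprodI.lift_of _ _

namespace Progenitor1

variable {n : ℕ} (N : Subgroup (Equiv.Perm (Fin n)))

def parity : Progenitor1 n N →* Multiplicative (ZMod 2) :=
  SemidirectProduct.lift (FP1.parity n) 1 fun σ => CoprodI.ext_hom _ _ fun i => by
    ext x
    simp

@[simp]
theorem parity_apply (g : Progenitor1 n N) : parity N g = FP1.parity n g.left := by
  conv_lhs => rw [← inl_left_mul_inr_right g]
  rw [map_mul, parity, lift_inl, lift_inr, MonoidHom.one_apply, mul_one]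

theorem parity_surjective [NeZero n] : Function.Surjective (parity N) :=
  fun x => ⟨inl (CoprodI.of (i := 0) x), by simp⟩

variable {N} (K : Subgroup (Progenitor1 n N)) [K.Normal]

theorem mk_inl_of_eq_mk_inl_of (hK : (inr : N →* Progenitor1 n N).range ≤ K)
    (htrans : MulAction.IsPretransitive N (Fin n)) (i j : Fin n) (x : Multiplicative (ZMod 2)) :
    ((inl (CoprodI.of (i := i) x) : Progenitor1 n N) : Progenitor1 n N ⧸ K) =
      ((inl (CoprodI.of (i := j) x) : Progenitor1 n N) : Progenitor1 n N ⧸ K) := by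
  obtain ⟨σ, rfl⟩ := htrans.exists_smul_eq i j
  have hσ : ((inr σ : Progenitor1 n N) : Progenitor1 n N ⧸ K) = 1 :=
    (QuotientGroup.eq_one_iff _).2 (hK ⟨σ, rfl⟩)
  have hconj : (inl (CoprodI.of (i := σ • i) x) : Progenitor1 n N) =
      inr σ * inl (CoprodI.of (i := i) x) * inr σ⁻¹ := by
    rw [← inl_aut]; exact congrArg inl (fp1Aut_apply_of σ.1 i x).symm
  rw [hconj, QuotientGroup.mk_mul, QuotientGroup.mk_mul, map_inv, QuotientGroup.mk_inv, hσ,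
    one_mul, inv_one, mul_one]

theorem mk_inl_eq_mk_inl_of_parity (hK : (inr : N →* Progenitor1 n N).range ≤ K)
    (htrans : MulAction.IsPretransitive N (Fin n)) (i₀ : Fin n) (f : FP1 n) :
    ((inl f : Progenitor1 n N) : Progenitor1 n N ⧸ K) =
      ((inl (CoprodI.of (i := i₀) (FP1.parity n f)) : Progenitor1 n N) : Progenitor1 n N ⧸ K) := by
  have h : (QuotientGroup.mk' K).comp (inl : FP1 n →* Progenitor1 n N) =
      ((QuotientGroup.mk' K).comp inl).comp ((CoprodI.of (i := i₀)).comp (FP1.parity n)) :=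
    CoprodI.ext_hom _ _ fun i => MonoidHom.ext fun x => by
      simpa using mk_inl_of_eq_mk_inl_of K hK htrans i i₀ x
  exact DFunLike.congr_fun h f

theorem ker_parity_le [NeZero n] (hK : (inr : N →* Progenitor1 n N).range ≤ K)
    (htrans : MulAction.IsPretransitive N (Fin n)) : (parity N).ker ≤ K := by
  intro g hg
  rw [MonoidHom.mem_ker, parity_apply] at hg
  rw [← QuotientGroup.eq_one_iff, ← inl_left_mul_inr_right g, QuotientGroup.mk_mul,
    mk_inl_eq_mk_inl_of_parity K hK htrans 0, hg, (QuotientGroup.eq_one_iff _).2 (hK ⟨_, rfl⟩)]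
  simp

variable (N) in
theorem index_ker_parity [NeZero n] : (parity N).ker.index = 2 := by
  rw [Subgroup.index_ker, MonoidHom.range_eq_top.2 (parity_surjective N), Subgroup.card_top,
    Nat.card_eq_fintype_card]
  rfl

theorem ker_parity_le_derivedSeries [NeZero n] (hperf : commutator N = ⊤)
    (htrans : MulAction.IsPretransitive N (Fin n)) (k : ℕ) :
    (parity N).ker ≤ derivedSeries (Progenitor1 n N) k :=
  ker_parity_le _ ((inr : N →* _).range_le_derivedSeries_of_commutator_eq_top hperf k) htrans

end Progenitor1

/-- If `N ≤ Sym(Fin n)` (`n ≥ 2`) is perfect and acts primitively on `Fin n`,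
then the commutator subgroup `P′` of the progenitor `P = 2^{⋆n} : N` has index exactly `2`
in `P`, and `P′` is perfect, i.e. `P″ = P′`. -/
theorem progenitor_commutator_index_two_and_perfect (n : ℕ) (hn : 2 ≤ n)
    (N : Subgroup (Equiv.Perm (Fin n)))
    (hperf : commutator ↥N = ⊤)
    (hprim : IsPreprimitive ↥N (Fin n)) :
    (commutator (Progenitor1 n N)).index = 2 ∧
      ⁅commutator (Progenitor1 n N), commutator (Progenitor1 n N)⁆ =
        commutator (Progenitor1 n N) := by
  have : NeZero n := ⟨by omega⟩
  have hcomm : commutator (Progenitor1 n N) = (Progenitor1.parity N).ker :=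
    le_antisymm (Abelianization.commutator_subset_ker _)
      (Progenitor1.ker_parity_le_derivedSeries hperf hprim.1 1)
  refine ⟨hcomm ▸ Progenitor1.index_ker_parity N,
    le_antisymm (Subgroup.commutator_le_left _ _) ?_⟩
  have h := Progenitor1.ker_parity_le_derivedSeries hperf hprim.1 2
  rwa [derivedSeries_succ, derivedSeries_one, ← hcomm] at h
end

section
/- Let n ≥ 2 and let N be a subgroup of the symmetric group Sym(Fin n) which is perfect and whose natural action on Fin n is primitive, and let P = F ⋊ N be the progenitor. Then every homomorphic image of P possesses a perfect subgroup of index at most 2: for every group G and every surjective group homomorphism φ : P → G, the commutator subgroup of G is perfect and has index dividing 2 in G. -/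
open Monoid

/-!
Let `G` be a homomorphic image of the progenitor: it is generated by the images `e(N)` of the
perfect group `N` and the involutions `t i`, which `e(N)` permutes transitively by conjugation.
If `G'` is abelian, then `e(N) ≤ G'` and `t i * t j = ⁅t i, e π⁆ ∈ G'` for `π i = j`, so
conjugation by `e(N)` fixes every `t i * t j`. Hence `π ↦ t i * t (π i)` is a homomorphism from
`N` to the abelian group `G'`, trivial because `N` is perfect: all the `t i` coincide and `G` is
abelian. Applied to `G ⧸ G''` this gives `G' = G''`; applied to `G ⧸ G'`, which is then
generated by a single involution, it gives `|G : G'| ∣ 2`.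
-/

open SemidirectProduct
open scoped commutatorElement

section SymmetricGeneration

open MulAction

variable {H G ι : Type*} [Group H] [Group G]

lemma MonoidHom.apply_mem_commutator_of_commutator_eq_top (f : H →* G)
    (hH : commutator H = ⊤) (h : H) : f h ∈ commutator G := by
  have hmap := map_derivedSeries_le_derivedSeries f 1
  rw [derivedSeries_one, derivedSeries_one, hH] at hmap
  exact hmap ⟨h, Subgroup.mem_top h, rfl⟩

lemma MonoidHom.eq_one_of_commutator_eq_top {A : Type*} [Group A] [IsMulCommutative A]
    (f : H →* A) (hH : commutator H = ⊤) : f = 1 := by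
  ext h
  simpa [commutator_eq_bot] using f.apply_mem_commutator_of_commutator_eq_top hH h

/-- `G` is symmetrically generated, in Curtis's sense, by the involutions `t i` with control
group `e(H)`; the homomorphic images of a progenitor are exactly such groups. -/
structure IsSymmetricGeneration [MulAction H ι] (e : H →* G) (t : ι → G) : Prop where
  mul_self : ∀ i, t i * t i = 1
  conj : ∀ (h : H) (i : ι), e h * t i * (e h)⁻¹ = t (h • i)
  closure_eq_top : Subgroup.closure (Set.range t ∪ Set.range e) = ⊤

namespace IsSymmetricGeneration

variable [MulAction H ι] {e : H →* G} {t : ι → G} (hG : IsSymmetricGeneration e t)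
include hG

lemma map {G' : Type*} [Group G'] (f : G →* G') (hf : Function.Surjective f) :
    IsSymmetricGeneration (f.comp e) (f ∘ t) where
  mul_self i := by simp only [Function.comp_apply, ← map_mul, hG.mul_self, map_one]
  conj h i := by
    simp only [MonoidHom.comp_apply, Function.comp_apply, ← hG.conj, map_mul, map_inv]
  closure_eq_top := by
    rw [Set.range_comp, MonoidHom.coe_comp, Set.range_comp, ← Set.image_union,
      ← MonoidHom.map_closure, hG.closure_eq_top, Subgroup.map_top_of_surjective f hf]

lemma mul_mem_commutator [IsPretransitive H ι] (i j : ι) : t i * t j ∈ commutator G := by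
  obtain ⟨h, rfl⟩ := exists_smul_eq H i j
  have hcomm : t i * t (h • i) = ⁅t i, e h⁆ := by
    rw [commutatorElement_def, ← hG.conj, inv_eq_of_mul_eq_one_right (hG.mul_self i)]
    group
  exact hcomm ▸ Subgroup.commutator_mem_commutator (Subgroup.mem_top _) (Subgroup.mem_top _)

lemma apply_eq_apply (hH : commutator H = ⊤) [IsPretransitive H ι]
    [IsMulCommutative (commutator G)] (i j : ι) : t i = t j := by
  have hfix : ∀ (h : H) (j k : ι), t (h • j) * t (h • k) = t j * t k := by
    intro h j k
    calc t (h • j) * t (h • k) = e h * (t j * t k) * (e h)⁻¹ := by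
          rw [← hG.conj, ← hG.conj]; group
      _ = t j * t k := by
        rw [setLike_mul_comm (e.apply_mem_commutator_of_commutator_eq_top hH h)
          (hG.mul_mem_commutator j k), mul_inv_cancel_right]
  let W : H →* commutator G :=
    { toFun h := ⟨t i * t (h • i), hG.mul_mem_commutator _ _⟩
      map_one' := by ext; simp [hG.mul_self]
      map_mul' h k := by
        ext
        simp only [Subgroup.coe_mul, mul_smul]
        rw [← hfix h i (k • i), ← mul_assoc, mul_assoc (t i), hG.mul_self, mul_one] }
  obtain ⟨h, rfl⟩ := exists_smul_eq H i j
  have hW : t i * t (h • i) = 1 :=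
    congrArg Subtype.val (DFunLike.congr_fun (W.eq_one_of_commutator_eq_top hH) h)
  exact (inv_eq_of_mul_eq_one_right (hG.mul_self i)).symm.trans (inv_eq_of_mul_eq_one_right hW)

lemma isMulCommutative (hH : commutator H = ⊤) [IsPretransitive H ι]
    [IsMulCommutative (commutator G)] : IsMulCommutative G := by
  have he := e.apply_mem_commutator_of_commutator_eq_top hH
  have hcomm : ∀ x ∈ Set.range t ∪ Set.range e, ∀ y ∈ Set.range t ∪ Set.range e,
      x * y = y * x := by
    have hte : ∀ i h, t i * e h = e h * t i := fun i h => by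
      rw [mul_inv_eq_iff_eq_mul.mp (hG.conj h i), hG.apply_eq_apply hH (h • i) i]
    rintro _ (⟨i, rfl⟩ | ⟨h, rfl⟩) _ (⟨j, rfl⟩ | ⟨k, rfl⟩)
    · rw [hG.apply_eq_apply hH i j]
    · exact hte i k
    · exact (hte j h).symm
    · exact setLike_mul_comm (he h) (he k)
  have := Subgroup.isMulCommutative_closure hcomm
  rw [hG.closure_eq_top] at this
  exact ⟨⟨fun x y => by
    simpa using setLike_mul_comm (Subgroup.mem_top x) (Subgroup.mem_top y)⟩⟩

lemma card_dvd_two (hH : commutator H = ⊤) [IsPretransitive H ι] [Nonempty ι]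
    [IsMulCommutative G] : Nat.card G ∣ 2 := by
  obtain ⟨i⟩ := ‹Nonempty ι›
  have htop : Subgroup.zpowers (t i) = ⊤ := by
    rw [eq_top_iff, ← hG.closure_eq_top, Subgroup.closure_le]
    rintro _ (⟨j, rfl⟩ | ⟨h, rfl⟩)
    · rw [hG.apply_eq_apply hH j i]
      exact Subgroup.mem_zpowers _
    · have he := e.apply_mem_commutator_of_commutator_eq_top hH h
      rw [commutator_eq_bot, Subgroup.mem_bot] at he
      rw [SetLike.mem_coe, he]
      exact one_mem _
  rw [← Subgroup.card_top, ← htop, Nat.card_zpowers]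
  exact orderOf_dvd_of_pow_eq_one (by rw [pow_two, hG.mul_self])

end IsSymmetricGeneration

end SymmetricGeneration

lemma isMulCommutative_commutator_quotient_commutator_commutator (G : Type*) [Group G] :
    IsMulCommutative (commutator (G ⧸ ⁅commutator G, commutator G⁆)) := by
  have hmap :=
    map_derivedSeries_eq (QuotientGroup.mk'_surjective ⁅commutator G, commutator G⁆) 1
  rw [derivedSeries_one, derivedSeries_one] at hmap
  rw [← Subgroup.commutator_self_eq_bot_iff, ← hmap, ← Subgroup.map_commutator,
    Subgroup.map_eq_bot_iff, QuotientGroup.ker_mk']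

lemma tFP1_mul_self {n : ℕ} (i : Fin n) : tFP1 i * tFP1 i = 1 := by
  rw [tFP1, ← map_mul, ← ofAdd_add]
  exact map_one _

lemma closure_range_tFP1 (n : ℕ) : Subgroup.closure (Set.range (tFP1 (n := n))) = ⊤ := by
  rw [eq_top_iff]
  rintro x -
  induction x using Monoid.CoprodI.induction_on with
  | one => exact one_mem _
  | of i m =>
    obtain rfl | rfl := (by decide : ∀ m : Multiplicative (ZMod 2), m = 1 ∨ m = .ofAdd 1) m
    · rw [map_one]
      exact one_mem _
    · exact Subgroup.subset_closure ⟨i, rfl⟩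
  | mul x y hx hy => exact mul_mem hx hy

lemma fp1Aut_tFP1 {n : ℕ} (σ : Equiv.Perm (Fin n)) (i : Fin n) :
    fp1Aut n σ (tFP1 i) = tFP1 (σ i) := by
  simp [fp1Aut, fp1Hom, tFP1]

lemma Progenitor1.isSymmetricGeneration {n : ℕ} (N : Subgroup (Equiv.Perm (Fin n))) :
    IsSymmetricGeneration (inr : N →* Progenitor1 n N) (fun i => inl (tFP1 i)) where
  mul_self i := by rw [← map_mul, tFP1_mul_self, map_one]
  conj π i := by
    rw [← map_inv, ← inl_aut, MonoidHom.comp_apply, fp1Aut_tFP1]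
    rfl
  closure_eq_top := by
    have hinl : (inl : FP1 n →* Progenitor1 n N).range ≤
        Subgroup.closure (Set.range (fun i => inl (tFP1 i)) ∪ Set.range inr) := by
      rw [MonoidHom.range_eq_map, ← closure_range_tFP1, MonoidHom.map_closure, ← Set.range_comp]
      exact Subgroup.closure_mono Set.subset_union_left
    rw [eq_top_iff]
    rintro x -
    rw [← inl_left_mul_inr_right x]
    exact mul_mem (hinl ⟨_, rfl⟩) (Subgroup.subset_closure (.inr ⟨_, rfl⟩))

/-- If `N ≤ Sym(Fin n)` (`n ≥ 2`) is perfect and acts primitively on `Fin n`,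
then every homomorphic image `G` of the progenitor `P = 2^{⋆n} : N` possesses a perfect
subgroup of index at most `2`: the commutator subgroup of `G` is perfect and has index
dividing `2` in `G`. -/
theorem progenitor_image_has_perfect_subgroup_of_index_at_most_two (n : ℕ) (hn : 2 ≤ n)
    (N : Subgroup (Equiv.Perm (Fin n)))
    (hperf : commutator ↥N = ⊤)
    (hprim : IsPreprimitive ↥N (Fin n))
    (G : Type*) [Group G] (φ : Progenitor1 n N →* G) (hφ : Function.Surjective φ) :
    ⁅commutator G, commutator G⁆ = commutator G ∧ (commutator G).index ∣ 2 := by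
  have : Nonempty (Fin n) := ⟨⟨0, by omega⟩⟩
  have := hprim.1
  have hG := (Progenitor1.isSymmetricGeneration N).map φ hφ
  refine ⟨le_antisymm (Subgroup.commutator_le_self _) ?_, ?_⟩
  · have := isMulCommutative_commutator_quotient_commutator_commutator G
    exact Subgroup.Normal.quotient_commutative_iff_commutator_le.mp
      ((hG.map _ (QuotientGroup.mk'_surjective _)).isMulCommutative hperf)
  · have : IsMulCommutative (Abelianization G) := ⟨⟨mul_comm⟩⟩
    exact (hG.map Abelianization.of (QuotientGroup.mk'_surjective _)).card_dvd_two hperf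
end

section
/- Let M̄ be the 6×6 matrix over the field ℤ/2ℤ with block form M̄ = [[I₃, J₃], [0₃, I₃]], where I₃ is the 3×3 identity matrix, J₃ the 3×3 all-ones matrix and 0₃ the 3×3 zero matrix, and let H be the subgroup of GL(6, ℤ/2ℤ) generated by M̄ together with all 6×6 permutation matrices. Then every element g of H preserves the quadratic form Q(x) = ∑_{i<j} x_i x_j on (ℤ/2ℤ)⁶: for all g ∈ H and all vectors x ∈ (Fin 6 → ℤ/2ℤ), Q(g·x) = Q(x), where g·x denotes the matrix–vector product. -/
/-- The 6×6 matrix over `ℤ/2ℤ` with block form `[[I₃, J₃], [0₃, I₃]]`. -/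
def MbarE6 : Matrix (Fin 6) (Fin 6) (ZMod 2) :=
  Matrix.reindex finSumFinEquiv finSumFinEquiv
    (Matrix.fromBlocks
      (1 : Matrix (Fin 3) (Fin 3) (ZMod 2))
      (Matrix.of fun _ _ : Fin 3 => (1 : ZMod 2))
      (0 : Matrix (Fin 3) (Fin 3) (ZMod 2)) (1 : Matrix (Fin 3) (Fin 3) (ZMod 2)))

/-- The subgroup of `GL(6, ℤ/2ℤ)` generated by `MbarE6` together with all permutation
matrices. -/
def HbarE6 : Subgroup (GL (Fin 6) (ZMod 2)) :=
  Subgroup.closure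
    {g : GL (Fin 6) (ZMod 2) | (g : Matrix (Fin 6) (Fin 6) (ZMod 2)) = MbarE6 ∨
      ∃ σ : Equiv.Perm (Fin 6), (g : Matrix (Fin 6) (Fin 6) (ZMod 2)) = σ.permMatrix (ZMod 2)}

/-- The quadratic form `Q(x) = ∑_{i<j} x_i x_j` on `(ℤ/2ℤ)⁶`. -/
def QE6 (x : Fin 6 → ZMod 2) : ZMod 2 :=
  ∑ i : Fin 6, ∑ j ∈ Finset.Ioi i, x i * x j

/-!
`Q` is the evaluation of the second elementary symmetric polynomial, so it is invariant under
permuting coordinates, i.e. under permutation matrices. For `M̄` a direct computation shows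
`Q(M̄x) - Q(x)` is twice a polynomial in `x`. The matrices preserving `Q` form a subgroup, which
therefore contains the group generated by `M̄` and the permutation matrices.
-/

open Finset Matrix MvPolynomial

theorem sum_sum_Ioi_mul_eq_eval_esymm_two {ι R : Type*} [LinearOrder ι] [Fintype ι]
    [LocallyFiniteOrderTop ι] [CommSemiring R] (x : ι → R) :
    ∑ i, ∑ j ∈ Ioi i, x i * x j = eval x (esymm ι R 2) := by
  simp only [esymm, map_sum, map_prod, eval_X]
  rw [sum_sigma']
  refine sum_bij (fun p _ => {p.1, p.2}) ?_ ?_ ?_ ?_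
  · rintro ⟨i, j⟩ hij
    rw [mem_sigma, mem_Ioi] at hij
    simp [card_pair hij.2.ne]
  · rintro ⟨i, j⟩ hij ⟨k, l⟩ hkl h
    rw [mem_sigma, mem_Ioi] at hij hkl
    have hi := h ▸ mem_insert_self i {j}
    have hj := h ▸ mem_insert_of_mem (mem_singleton_self j)
    have hk := h.symm ▸ mem_insert_self k {l}
    simp only [mem_insert, mem_singleton] at hi hj hk
    grind
  · intro t ht
    obtain ⟨i, j, hne, rfl⟩ := card_eq_two.1 (mem_powersetCard.1 ht).2
    rcases hne.lt_or_gt with h | h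
    · exact ⟨⟨i, j⟩, by simpa using h, rfl⟩
    · exact ⟨⟨j, i⟩, by simpa using h, pair_comm _ _⟩
  · rintro ⟨i, j⟩ hij
    rw [mem_sigma, mem_Ioi] at hij
    rw [prod_pair hij.2.ne]

theorem eval_esymm_comp_perm {ι R : Type*} [Fintype ι] [CommSemiring R] (n : ℕ)
    (σ : Equiv.Perm ι) (x : ι → R) :
    eval (x ∘ σ) (esymm ι R n) = eval x (esymm ι R n) := by
  rw [← eval_rename, esymm_isSymmetric ι R n σ]

def Matrix.GeneralLinearGroup.preservingSubgroup {n R α : Type*} [Fintype n] [DecidableEq n]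
    [CommRing R] (f : (n → R) → α) : Subgroup (GL n R) where
  carrier := {g | ∀ x, f ((g : Matrix n n R) *ᵥ x) = f x}
  one_mem' x := by simp
  mul_mem' {a b} ha hb x := by
    rw [Units.val_mul, ← mulVec_mulVec, ha, hb]
  inv_mem' {g} hg x := by
    have := hg ((g⁻¹ : GL n R) *ᵥ x)
    rwa [mulVec_mulVec, ← Units.val_mul, mul_inv_cancel, Units.val_one, one_mulVec,
      eq_comm] at this

lemma QE6_comp_perm (σ : Equiv.Perm (Fin 6)) (x : Fin 6 → ZMod 2) : QE6 (x ∘ σ) = QE6 x := by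
  simp only [QE6, sum_sum_Ioi_mul_eq_eval_esymm_two, eval_esymm_comp_perm]

lemma MbarE6_eq : MbarE6 = !![1, 0, 0, 1, 1, 1; 0, 1, 0, 1, 1, 1; 0, 0, 1, 1, 1, 1;
    0, 0, 0, 1, 0, 0; 0, 0, 0, 0, 1, 0; 0, 0, 0, 0, 0, 1] := by
  decide

lemma MbarE6_mulVec (x : Fin 6 → ZMod 2) :
    MbarE6 *ᵥ x = ![x 0 + (x 3 + x 4 + x 5), x 1 + (x 3 + x 4 + x 5), x 2 + (x 3 + x 4 + x 5),
      x 3, x 4, x 5] := by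
  ext i
  fin_cases i <;> simp [MbarE6_eq, vecHead, vecTail, add_assoc]

lemma QE6_eq (x : Fin 6 → ZMod 2) : QE6 x =
    x 0 * (x 1 + x 2 + x 3 + x 4 + x 5) + x 1 * (x 2 + x 3 + x 4 + x 5) + x 2 * (x 3 + x 4 + x 5)
      + x 3 * (x 4 + x 5) + x 4 * x 5 := by
  simp [QE6, Fin.sum_univ_succ, Fin.sum_Ioi_succ, mul_add, add_assoc]

/- With `a = x₀ + x₁ + x₂` and `s = x₃ + x₄ + x₅`, the identity
`Q(M̄x) = Q(x) + 2 (a s + 3 s²)` holds over any commutative ring. -/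
lemma QE6_MbarE6_mulVec (x : Fin 6 → ZMod 2) : QE6 (MbarE6 *ᵥ x) = QE6 x := by
  rw [QE6_eq, QE6_eq, MbarE6_mulVec]
  simp only [Matrix.cons_val]
  linear_combination ((x 0 + x 1 + x 2) * (x 3 + x 4 + x 5) + 3 * (x 3 + x 4 + x 5) ^ 2) *
    CharTwo.two_eq_zero (R := ZMod 2)

/-- Every element of the subgroup of `GL(6, ℤ/2ℤ)` generated by
`M̄ = [[I₃, J₃], [0₃, I₃]]` together with all `6×6` permutation matrices preserves the
quadratic form `Q(x) = ∑_{i<j} x_i x_j` on `(ℤ/2ℤ)⁶`. -/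
theorem matrixGroup_E6_mod2_preserves_quadraticForm :
    ∀ g ∈ HbarE6, ∀ x : Fin 6 → ZMod 2,
      QE6 ((g : Matrix (Fin 6) (Fin 6) (ZMod 2)).mulVec x) = QE6 x := by
  suffices HbarE6 ≤ GeneralLinearGroup.preservingSubgroup QE6 from fun g hg => this hg
  refine (Subgroup.closure_le _).2 ?_
  rintro g (hg | ⟨σ, hσ⟩) x
  · rw [hg, QE6_MbarE6_mulVec]
  · rw [hσ, permMatrix_mulVec, QE6_comp_perm]
end
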